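/- Let ε > 0, n ≥ 3, and let h be the bounded solution of L h = 0 on (0,1) with h(1) = 1 (L as above). Then for β ≥ (2α^2+α(n-1))/(n-3+α), there is a constant C = C(β, n) > 0 independent of ε such that h(r) ≥ (1/C) r^β (ε + r^2)^{(α-β)/2} for all r ∈ (0,1). -/

import Mathlib

noncomputable def L (n : ℕ) (ε : ℝ) (V : ℝ → ℝ) (r : ℝ) : ℝ :=
  deriv (deriv V) r + (((n : ℝ) - 2) / r + 2 * r / (ε + r ^ 2)) * deriv V r
    - ((n : ℝ) - 2) / r ^ 2 * V r

noncomputable def alpha (n : ℕ) : ℝ :=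
  (-((n : ℝ) - 1) + Real.sqrt (((n : ℝ) - 1) ^ 2 + 4 * ((n : ℝ) - 2))) / 2

open Set Filter

lemma alpha_quad {n : ℕ} (hn : 3 ≤ n) :
    alpha n ^ 2 + ((n : ℝ) - 1) * alpha n - ((n : ℝ) - 2) = 0 := by
  have hn' : (3:ℝ) ≤ (n:ℝ) := by exact_mod_cast hn
  have hD : (0:ℝ) ≤ ((n:ℝ) - 1) ^ 2 + 4 * ((n:ℝ) - 2) := by nlinarith
  have hs : Real.sqrt (((n:ℝ) - 1) ^ 2 + 4 * ((n:ℝ) - 2)) ^ 2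
      = ((n:ℝ) - 1) ^ 2 + 4 * ((n:ℝ) - 2) := Real.sq_sqrt hD
  unfold alpha
  linear_combination hs / 4

lemma alpha_pos {n : ℕ} (hn : 3 ≤ n) : 0 < alpha n := by
  have hn' : (3:ℝ) ≤ (n:ℝ) := by exact_mod_cast hn
  have h2 : ((n:ℝ) - 1) < Real.sqrt (((n:ℝ) - 1) ^ 2 + 4 * ((n:ℝ) - 2)) := by
    rw [Real.lt_sqrt (by linarith)]
    nlinarith
  unfold alpha
  linarith

lemma alpha_mul_le {n : ℕ} (hn : 3 ≤ n) : (n:ℝ) * alpha n ≤ (n:ℝ) - 1 := by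
  have hn' : (3:ℝ) ≤ (n:ℝ) := by exact_mod_cast hn
  have hq := alpha_quad hn
  have hp := alpha_pos hn
  nlinarith [sq_nonneg ((n:ℝ) * alpha n - ((n:ℝ) - 1)), sq_nonneg (alpha n)]

/-- The subsolution. -/
noncomputable def Usub (β γ ε : ℝ) : ℝ → ℝ := fun x => x ^ β * (ε + x ^ 2) ^ γ

/-- First derivative of the subsolution. -/
noncomputable def Usub1 (β γ ε : ℝ) : ℝ → ℝ := fun x =>
  β * x ^ (β - 1) * (ε + x ^ 2) ^ γ + x ^ β * (2 * x * γ * (ε + x ^ 2) ^ (γ - 1))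

/-- Second derivative of the subsolution. -/
noncomputable def Usub2 (β γ ε : ℝ) : ℝ → ℝ := fun x =>
  (β * ((β - 1) * x ^ (β - 1 - 1)) * (ε + x ^ 2) ^ γ
    + β * x ^ (β - 1) * (2 * x * γ * (ε + x ^ 2) ^ (γ - 1)))
  + (β * x ^ (β - 1) * (2 * x * γ * (ε + x ^ 2) ^ (γ - 1))
    + x ^ β * ((γ * (2 * x * (γ - 1) * (ε + x ^ 2) ^ (γ - 1 - 1))) * (2 * x)
        + γ * (ε + x ^ 2) ^ (γ - 1) * 2))

lemma hasDerivAt_sq_add (ε x : ℝ) : HasDerivAt (fun x : ℝ => ε + x ^ 2) (2 * x) x := by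
  simpa using (hasDerivAt_pow 2 x).const_add ε

lemma hasDerivAt_Usub {β γ ε x : ℝ} (hε : 0 < ε) (hx : 0 < x) :
    HasDerivAt (Usub β γ ε) (Usub1 β γ ε x) x := by
  have hs : (0:ℝ) < ε + x ^ 2 := by positivity
  have h1 : HasDerivAt (fun x : ℝ => x ^ β) (β * x ^ (β - 1)) x :=
    Real.hasDerivAt_rpow_const (Or.inl hx.ne')
  have h3 : HasDerivAt (fun x : ℝ => (ε + x ^ 2) ^ γ)
      (2 * x * γ * (ε + x ^ 2) ^ (γ - 1)) x :=
    (hasDerivAt_sq_add ε x).rpow_const (Or.inl hs.ne')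
  exact h1.mul h3

lemma hasDerivAt_Usub1 {β γ ε x : ℝ} (hε : 0 < ε) (hx : 0 < x) :
    HasDerivAt (Usub1 β γ ε) (Usub2 β γ ε x) x := by
  have hs : (0:ℝ) < ε + x ^ 2 := by positivity
  have h1 : HasDerivAt (fun x : ℝ => x ^ (β - 1)) ((β - 1) * x ^ (β - 1 - 1)) x :=
    Real.hasDerivAt_rpow_const (Or.inl hx.ne')
  have h1' : HasDerivAt (fun x : ℝ => x ^ β) (β * x ^ (β - 1)) x :=
    Real.hasDerivAt_rpow_const (Or.inl hx.ne')
  have h3 : HasDerivAt (fun x : ℝ => (ε + x ^ 2) ^ γ)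
      (2 * x * γ * (ε + x ^ 2) ^ (γ - 1)) x :=
    (hasDerivAt_sq_add ε x).rpow_const (Or.inl hs.ne')
  have h4 : HasDerivAt (fun x : ℝ => (ε + x ^ 2) ^ (γ - 1))
      (2 * x * (γ - 1) * (ε + x ^ 2) ^ (γ - 1 - 1)) x :=
    (hasDerivAt_sq_add ε x).rpow_const (Or.inl hs.ne')
  have h5 : HasDerivAt (fun x : ℝ => 2 * x) 2 x := by
    simpa using (hasDerivAt_id x).const_mul 2
  have hA := (h1.const_mul β).mul h3
  have hinner : HasDerivAt (fun x : ℝ => 2 * x * γ * (ε + x ^ 2) ^ (γ - 1))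
      ((2 * γ) * (ε + x ^ 2) ^ (γ - 1) + (2 * x * γ) * (2 * x * (γ - 1) * (ε + x ^ 2) ^ (γ - 1 - 1))) x := by
    have h6 : HasDerivAt (fun x : ℝ => 2 * x * γ) (2 * γ) x := by
      simpa using h5.mul_const γ
    exact h6.mul h4
  have hB := h1'.mul hinner
  have heq : Usub2 β γ ε x
      = (β * ((β - 1) * x ^ (β - 1 - 1)) * (ε + x ^ 2) ^ γ
          + β * x ^ (β - 1) * (2 * x * γ * (ε + x ^ 2) ^ (γ - 1)))
        + (β * x ^ (β - 1) * (2 * x * γ * (ε + x ^ 2) ^ (γ - 1))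
          + x ^ β * ((2 * γ) * (ε + x ^ 2) ^ (γ - 1)
              + (2 * x * γ) * (2 * x * (γ - 1) * (ε + x ^ 2) ^ (γ - 1 - 1)))) := by
    unfold Usub2; ring
  rw [heq]
  exact hA.add hB

lemma deriv_Usub {β γ ε : ℝ} (hε : 0 < ε) {x : ℝ} (hx : 0 < x) :
    deriv (Usub β γ ε) x = Usub1 β γ ε x :=
  (hasDerivAt_Usub hε hx).deriv

lemma deriv2_Usub {β γ ε : ℝ} (hε : 0 < ε) {x : ℝ} (hx : 0 < x) :
    deriv (deriv (Usub β γ ε)) x = Usub2 β γ ε x := by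
  have hev : deriv (Usub β γ ε) =ᶠ[nhds x] Usub1 β γ ε :=
    eventually_of_mem (Ioi_mem_nhds hx) fun y hy => (hasDerivAt_Usub hε hy).deriv
  rw [hev.deriv_eq, (hasDerivAt_Usub1 hε hx).deriv]

lemma one_le_beta {n : ℕ} (hn : 3 ≤ n) {β : ℝ}
    (hβ : β ≥ (2 * alpha n ^ 2 + alpha n * ((n : ℝ) - 1)) / ((n : ℝ) - 3 + alpha n)) :
    1 ≤ β := by
  have hn' : (3:ℝ) ≤ (n:ℝ) := by exact_mod_cast hn
  have hq := alpha_quad hn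
  have hp := alpha_pos hn
  have hml := alpha_mul_le hn
  have hden : (0:ℝ) < (n:ℝ) - 3 + alpha n := by linarith
  have hβden : 2 * alpha n ^ 2 + alpha n * ((n : ℝ) - 1) ≤ β * ((n : ℝ) - 3 + alpha n) :=
    (div_le_iff₀ hden).mp hβ
  nlinarith

set_option maxHeartbeats 1600000 in
lemma LUsub_nonneg (n : ℕ) (hn : 3 ≤ n) {β : ℝ}
    (hβ : β ≥ (2 * alpha n ^ 2 + alpha n * ((n : ℝ) - 1)) / ((n : ℝ) - 3 + alpha n))
    {ε r : ℝ} (hε : 0 < ε) (hr : 0 < r) :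
    0 ≤ L n ε (Usub β ((alpha n - β) / 2) ε) r := by
  have hn' : (3:ℝ) ≤ (n:ℝ) := by exact_mod_cast hn
  set a := alpha n with ha_def
  have hq := alpha_quad hn
  have hp := alpha_pos hn
  have hml := alpha_mul_le hn
  rw [← ha_def] at hq hp hml
  have hβ1 : 1 ≤ β := one_le_beta hn hβ
  have hden : (0:ℝ) < (n:ℝ) - 3 + a := by linarith
  have hβden : 2 * a ^ 2 + a * ((n : ℝ) - 1) ≤ β * ((n : ℝ) - 3 + a) :=
    (div_le_iff₀ hden).mp hβ
  have hs : (0:ℝ) < ε + r ^ 2 := by positivity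
  rw [L, deriv2_Usub hε hr, deriv_Usub hε hr]
  have e0 : r ^ (β - 1 - 1) = r ^ (β - 2) := by congr 1; ring
  have e1 : r ^ (β - 1) = r ^ (β - 2) * r := by
    have h' : r ^ (β - 2) * r = r ^ (β - 2) * r ^ (1:ℝ) := by rw [Real.rpow_one]
    rw [h', ← Real.rpow_add hr]; congr 1; ring
  have e2 : r ^ β = r ^ (β - 2) * r ^ 2 := by
    have h2 : r ^ ((2:ℕ):ℝ) = r ^ (2:ℕ) := Real.rpow_natCast _ 2
    rw [← h2, ← Real.rpow_add hr]; congr 1; push_cast; ring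
  have f0 : (ε + r ^ 2) ^ ((a - β) / 2 - 1 - 1) = (ε + r ^ 2) ^ ((a - β) / 2 - 2) := by
    congr 1; ring
  have f1 : (ε + r ^ 2) ^ ((a - β) / 2 - 1)
      = (ε + r ^ 2) ^ ((a - β) / 2 - 2) * (ε + r ^ 2) := by
    have h' : (ε + r ^ 2) ^ ((a - β) / 2 - 2) * (ε + r ^ 2)
        = (ε + r ^ 2) ^ ((a - β) / 2 - 2) * (ε + r ^ 2) ^ (1:ℝ) := by rw [Real.rpow_one]
    rw [h', ← Real.rpow_add hs]; congr 1; ring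
  have f2 : (ε + r ^ 2) ^ ((a - β) / 2)
      = (ε + r ^ 2) ^ ((a - β) / 2 - 2) * (ε + r ^ 2) ^ 2 := by
    have h2 : (ε + r ^ 2) ^ ((2:ℕ):ℝ) = (ε + r ^ 2) ^ (2:ℕ) := Real.rpow_natCast _ 2
    rw [← h2, ← Real.rpow_add hs]; congr 1; push_cast; ring
  have key : Usub2 β ((a - β) / 2) ε r
        + (((n : ℝ) - 2) / r + 2 * r / (ε + r ^ 2)) * Usub1 β ((a - β) / 2) ε r
        - ((n : ℝ) - 2) / r ^ 2 * Usub β ((a - β) / 2) ε r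
      = r ^ (β - 2) * (ε + r ^ 2) ^ ((a - β) / 2 - 2) *
          ((β - 1) * (β + (n:ℝ) - 2) * (ε + r ^ 2) ^ 2
            + (2 * ((a - β) / 2) * (2 * β + (n:ℝ) - 1) + 2 * β) * (r ^ 2 * (ε + r ^ 2))
            + 4 * ((a - β) / 2) ^ 2 * r ^ 4) := by
    unfold Usub Usub1 Usub2
    rw [e0, e1, e2, f0, f1, f2]
    field_simp
    ring
  rw [key]
  have hQ : (β - 1) * (β + (n:ℝ) - 2) * (ε + r ^ 2) ^ 2
        + (2 * ((a - β) / 2) * (2 * β + (n:ℝ) - 1) + 2 * β) * (r ^ 2 * (ε + r ^ 2))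
        + 4 * ((a - β) / 2) ^ 2 * r ^ 4
      = (β - 1) * (β + (n:ℝ) - 2) * ε ^ 2
        + (β * ((n:ℝ) - 3 + 2 * a) - (2 * a ^ 2 + a * ((n:ℝ) - 1))) * (ε * r ^ 2) := by
    linear_combination (r ^ 4 + 2 * ε * r ^ 2) * hq
  rw [hQ]
  have hβnn : (0:ℝ) ≤ β := by linarith
  have hc1 : 0 ≤ (β - 1) * (β + (n:ℝ) - 2) :=
    mul_nonneg (by linarith) (by linarith)
  have hc2 : 0 ≤ β * ((n:ℝ) - 3 + 2 * a) - (2 * a ^ 2 + a * ((n:ℝ) - 1)) := by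
    nlinarith [mul_nonneg hβnn hp.le]
  have : 0 ≤ (β - 1) * (β + (n:ℝ) - 2) * ε ^ 2
      + (β * ((n:ℝ) - 3 + 2 * a) - (2 * a ^ 2 + a * ((n:ℝ) - 1))) * (ε * r ^ 2) := by
    have h1 : 0 ≤ (β - 1) * (β + (n:ℝ) - 2) * ε ^ 2 := by positivity
    have h2 : 0 ≤ (β * ((n:ℝ) - 3 + 2 * a) - (2 * a ^ 2 + a * ((n:ℝ) - 1))) * (ε * r ^ 2) := by
      have : 0 ≤ ε * r ^ 2 := by positivity
      exact mul_nonneg hc2 this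
    linarith
  have hAB : 0 ≤ r ^ (β - 2) * (ε + r ^ 2) ^ ((a - β) / 2 - 2) := by positivity
  exact mul_nonneg hAB this

theorem h_lower_bound (n : ℕ) (hn : 3 ≤ n) (β : ℝ)
    (hβ : β ≥ (2 * alpha n ^ 2 + alpha n * ((n : ℝ) - 1)) / ((n : ℝ) - 3 + alpha n)) :
    ∃ C : ℝ, 0 < C ∧ ∀ ε : ℝ, 0 < ε → ∀ h : ℝ → ℝ,
      ContinuousOn h (Set.Icc 0 1) → ContDiffOn ℝ 2 h (Set.Ioo 0 1) →
      (∀ r ∈ Set.Ioo (0 : ℝ) 1, L n ε h r = 0) → h 1 = 1 →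
      (∀ r ∈ Set.Ioo (0 : ℝ) 1, r < h r) →
      (∀ r ∈ Set.Ioo (0 : ℝ) 1, h r < r ^ alpha n) →
      ∀ r ∈ Set.Ioo (0 : ℝ) 1,
        (1 / C) * r ^ β * (ε + r ^ 2) ^ ((alpha n - β) / 2) ≤ h r := by
  refine ⟨1, one_pos, ?_⟩
  intro ε hε h hcont hC2 hLh h1 hlow hup r hr
  have hn' : (3:ℝ) ≤ (n:ℝ) := by exact_mod_cast hn
  set a := alpha n with ha_def
  have hq := alpha_quad hn
  have hp := alpha_pos hn
  have hml := alpha_mul_le hn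
  rw [← ha_def] at hq hp hml
  have hβ1 : 1 ≤ β := one_le_beta hn hβ
  have hβ0 : β ≠ 0 := by linarith
  have hγ : (a - β) / 2 ≤ 0 := by nlinarith
  set γ := (a - β) / 2 with hγ_def
  set U : ℝ → ℝ := Usub β γ ε with hU_def
  set w : ℝ → ℝ := fun x => h x - U x with hw_def
  -- continuity of U and w on [0,1]
  have hUcont : ContinuousOn U (Set.Icc 0 1) := by
    apply ContinuousOn.mul
    · exact continuousOn_id.rpow_const fun x _ => Or.inr (by linarith)
    · apply ContinuousOn.rpow_const
      · exact continuousOn_const.add (continuousOn_pow 2)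
      · intro x _
        exact Or.inl (by positivity)
  have hwcont : ContinuousOn w (Set.Icc 0 1) := hcont.sub hUcont
  -- boundary values
  have hU0 : U 0 = 0 := by
    simp [hU_def, Usub, Real.zero_rpow hβ0]
  have hh0 : 0 ≤ h 0 := by
    have hc : ContinuousWithinAt h (Set.Ioo (0:ℝ) 1) 0 :=
      (hcont 0 ⟨le_rfl, by norm_num⟩).mono Set.Ioo_subset_Icc_self
    have hne : (nhdsWithin (0:ℝ) (Set.Ioo (0:ℝ) 1)).NeBot := by
      apply mem_closure_iff_nhdsWithin_neBot.mp
      rw [closure_Ioo (by norm_num : (0:ℝ) ≠ 1)]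
      exact ⟨le_rfl, by norm_num⟩
    refine ge_of_tendsto hc ?_
    filter_upwards [self_mem_nhdsWithin] with x hx
    exact le_of_lt (lt_trans hx.1 (hlow x hx))
  have hw0 : 0 ≤ w 0 := by simp [hw_def, hU0, hh0]
  have hw1 : 0 ≤ w 1 := by
    have hU1 : U 1 ≤ 1 := by
      simp only [hU_def, Usub]
      rw [Real.one_rpow, one_mul]
      norm_num
      exact Real.rpow_le_one_of_one_le_of_nonpos (by linarith) hγ
    simp only [hw_def, h1]
    linarith
  -- minimum of w on [0,1]
  obtain ⟨r₀, hr₀mem, hmin⟩ :=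
    isCompact_Icc.exists_isMinOn (Set.nonempty_Icc.mpr (by norm_num)) hwcont
  have hmain : 0 ≤ w r₀ := by
    by_contra hneg
    push_neg at hneg
    have hr₀0 : r₀ ≠ 0 := by
      intro h0; rw [h0] at hneg; linarith
    have hr₀1 : r₀ ≠ 1 := by
      intro h0; rw [h0] at hneg; linarith
    have hr₀ : r₀ ∈ Set.Ioo (0:ℝ) 1 :=
      ⟨lt_of_le_of_ne hr₀mem.1 (Ne.symm hr₀0), lt_of_le_of_ne hr₀mem.2 hr₀1⟩
    -- differentiability of h
    have hdh : ∀ x ∈ Set.Ioo (0:ℝ) 1, DifferentiableAt ℝ h x := fun x hx =>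
      ((hC2.differentiableOn (by norm_num)) x hx).differentiableAt (isOpen_Ioo.mem_nhds hx)
    have hC2' : ContDiffOn ℝ 1 (deriv h) (Set.Ioo 0 1) :=
      hC2.deriv_of_isOpen isOpen_Ioo (by norm_num)
    have hd2h : HasDerivAt (deriv h) (deriv (deriv h) r₀) r₀ :=
      (((hC2'.differentiableOn (by norm_num)) r₀ hr₀).differentiableAt
        (isOpen_Ioo.mem_nhds hr₀)).hasDerivAt
    -- first derivative vanishes at the minimum
    have hloc : IsLocalMin w r₀ := hmin.isLocalMin (Icc_mem_nhds hr₀.1 hr₀.2)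
    have hderivw0 : deriv w r₀ = 0 := hloc.deriv_eq_zero
    have hderivw : deriv w r₀ = deriv h r₀ - Usub1 β γ ε r₀ := by
      rw [hw_def]
      rw [deriv_fun_sub (hdh r₀ hr₀) (hasDerivAt_Usub hε hr₀.1).differentiableAt]
      rw [deriv_Usub hε hr₀.1]
    have hφ0 : deriv h r₀ - Usub1 β γ ε r₀ = 0 := by rw [← hderivw, hderivw0]
    -- the function φ = (h - U)' near r₀
    set φ : ℝ → ℝ := fun x => deriv h x - Usub1 β γ ε x with hφ_def
    have hφd : HasDerivAt φ (deriv (deriv h) r₀ - Usub2 β γ ε r₀) r₀ :=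
      hd2h.sub (hasDerivAt_Usub1 hε hr₀.1)
    -- K < 0
    have hcpos : 0 < ((n:ℝ) - 2) / r₀ ^ 2 := by
      apply div_pos (by linarith) (by positivity)
    have hLh0 := hLh r₀ hr₀
    have hLU0 := LUsub_nonneg n hn hβ hε hr₀.1
    rw [L] at hLh0
    rw [L, deriv2_Usub hε hr₀.1, deriv_Usub hε hr₀.1] at hLU0
    rw [← ha_def, ← hγ_def] at hLU0
    have hK : deriv (deriv h) r₀ - Usub2 β γ ε r₀ < 0 := by
      have hwneg : h r₀ - Usub β γ ε r₀ < 0 := hneg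
      have hD1 : deriv h r₀ = Usub1 β γ ε r₀ := by linarith
      rw [hD1] at hLh0
      nlinarith [hLh0, hLU0, mul_neg_of_pos_of_neg hcpos hwneg]
    -- slope of φ is eventually negative to the right of r₀
    have hslope : Tendsto (slope φ r₀) (nhdsWithin r₀ {r₀}ᶜ)
        (nhds (deriv (deriv h) r₀ - Usub2 β γ ε r₀)) :=
      hasDerivAt_iff_tendsto_slope.mp hφd
    have hslope' : Tendsto (slope φ r₀) (nhdsWithin r₀ (Set.Ioi r₀))
        (nhds (deriv (deriv h) r₀ - Usub2 β γ ε r₀)) :=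
      hslope.mono_left (nhdsWithin_mono _ fun y hy => ne_of_gt hy)
    have hev1 : ∀ᶠ y in nhdsWithin r₀ (Set.Ioi r₀), slope φ r₀ y < 0 :=
      hslope' (Iio_mem_nhds hK)
    have hev2 : ∀ᶠ y in nhdsWithin r₀ (Set.Ioi r₀), y ∈ Set.Ioo r₀ 1 :=
      eventually_of_mem (Ioo_mem_nhdsGT_of_mem ⟨le_rfl, hr₀.2⟩) fun y hy => hy
    have hmem : {y | slope φ r₀ y < 0 ∧ y ∈ Set.Ioo r₀ 1} ∈ nhdsWithin r₀ (Set.Ioi r₀) :=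
      hev1.and hev2
    obtain ⟨u, hu, husub⟩ := mem_nhdsGT_iff_exists_Ioo_subset.mp hmem
    -- choose t
    set t : ℝ := (r₀ + min u 1) / 2 with ht_def
    have hr₀t : r₀ < t := by
      have : r₀ < min u 1 := lt_min hu hr₀.2
      rw [ht_def]; linarith
    have htu : t < u := by
      have h1' : min u 1 ≤ u := min_le_left _ _
      have : r₀ < u := hu
      rw [ht_def]
      have hm : r₀ < min u 1 := lt_min hu hr₀.2
      nlinarith [min_le_left u 1]
    have ht1 : t < 1 := by
      have hm : r₀ < min u 1 := lt_min hu hr₀.2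
      have : min u 1 ≤ 1 := min_le_right _ _
      rw [ht_def]; linarith
    have htmem : t ∈ Set.Icc (0:ℝ) 1 := ⟨by linarith [hr₀.1], le_of_lt ht1⟩
    -- w is strictly decreasing on [r₀, t]
    have hanti : StrictAntiOn w (Set.Icc r₀ t) := by
      apply strictAntiOn_of_deriv_neg (convex_Icc r₀ t)
      · exact hwcont.mono (Set.Icc_subset_Icc (le_of_lt hr₀.1) (le_of_lt ht1))
      · intro y hy
        rw [interior_Icc] at hy
        have hyu : y ∈ Set.Ioo r₀ u := ⟨hy.1, lt_trans hy.2 htu⟩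
        obtain ⟨hyslope, hyIoo⟩ := husub hyu
        have hyIoo' : y ∈ Set.Ioo (0:ℝ) 1 := ⟨lt_trans hr₀.1 hyIoo.1, hyIoo.2⟩
        have hderivwy : deriv w y = φ y := by
          rw [hw_def]
          rw [deriv_fun_sub (hdh y hyIoo') (hasDerivAt_Usub hε hyIoo'.1).differentiableAt]
          rw [deriv_Usub hε hyIoo'.1]
        rw [hderivwy]
        have hy' : 0 < y - r₀ := by linarith [hyu.1]
        have hsl : (φ y - φ r₀) / (y - r₀) < 0 := by
          have : slope φ r₀ y = (φ y - φ r₀) / (y - r₀) := by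
            simp [slope, div_eq_inv_mul]
          rw [← this]; exact hyslope
        have hφr₀ : φ r₀ = 0 := hφ0
        rw [hφr₀, sub_zero] at hsl
        rcases div_neg_iff.mp hsl with ⟨h1', h2'⟩ | ⟨h1', h2'⟩
        · linarith
        · exact h1' 
    have hcontr : w t < w r₀ :=
      hanti ⟨le_rfl, le_of_lt hr₀t⟩ ⟨le_of_lt hr₀t, le_rfl⟩ hr₀t
    have : w r₀ ≤ w t := hmin htmem
    linarith
  -- conclude
  have hwr : 0 ≤ w r := le_trans hmain (hmin (Set.Ioo_subset_Icc_self hr))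
  have : U r ≤ h r := by
    simp only [hw_def] at hwr; linarith
  calc (1 / 1) * r ^ β * (ε + r ^ 2) ^ ((a - β) / 2)
      = U r := by rw [hU_def]; norm_num [Usub]; exact Or.inl rfl
    _ ≤ h r := this
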